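/- arXiv:1306.4549 — 2 statements merged into one kernel-verified Lean document; each statement's English description precedes it below -/
import Mathlib

section
/- Consider the r-th order greedy ΣΔ scheme with the 2L-level mid-rise alphabet A = {±(2j+1)δ/2 : j = 0,...,L-1}: given input y ∈ ℝ^m, define u_i = 0 for i ≤ 0 and recursively q_i = Q(Σ_{j=1}^r (-1)^{j-1} C(r,j) u_{i-j} + y_i), u_i = Σ_{j=1}^r (-1)^{j-1} C(r,j) u_{i-j} + y_i - q_i, where Q rounds to the nearest element of A. If ‖y‖_∞ ≤ C and L ≥ 2⌈C/δ⌉ + 2^r + 1, then ‖u‖_∞ ≤ δ/2. -/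
/-- The 2L-level mid-rise alphabet with step size δ. -/
def midRise (δ : ℝ) (L : ℕ) : Set ℝ :=
  {x | ∃ j : ℕ, j < L ∧ (x = (2 * j + 1) * δ / 2 ∨ x = -((2 * j + 1) * δ / 2))}

lemma midRise_near (δ : ℝ) (hδ : 0 < δ) (L : ℕ) (hL : 1 ≤ L) (t : ℝ)
    (ht : |t| ≤ L * δ) : ∃ a ∈ midRise δ L, |t - a| ≤ δ / 2 := by
  set j := min (⌊|t| / δ⌋₊) (L - 1) with hj
  have hjL : j < L := lt_of_le_of_lt (min_le_right _ _) (by omega)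
  have key : |(|t|) - (2 * j + 1) * δ / 2| ≤ δ / 2 := by
    rcases le_or_gt (⌊|t| / δ⌋₊) (L - 1) with h | h
    · have hje : j = ⌊|t| / δ⌋₊ := min_eq_left h
      have h1 : (j : ℝ) ≤ |t| / δ := by rw [hje]; exact Nat.floor_le (by positivity)
      have h2 : |t| / δ < j + 1 := by rw [hje]; exact Nat.lt_floor_add_one _
      have h1' : (j : ℝ) * δ ≤ |t| := (le_div_iff₀ hδ).mp h1
      have h2' : |t| < ((j : ℝ) + 1) * δ := (div_lt_iff₀ hδ).mp h2
      rw [abs_le]; constructor <;> nlinarith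
    · have hje : j = L - 1 := min_eq_right (by omega)
      have h1 : ((L : ℝ)) ≤ ⌊|t| / δ⌋₊ := by exact_mod_cast Nat.cast_le.mpr (by omega : L ≤ ⌊|t| / δ⌋₊)
      have h2 : (⌊|t| / δ⌋₊ : ℝ) ≤ |t| / δ := Nat.floor_le (by positivity)
      have h3 : (L : ℝ) * δ ≤ |t| := (le_div_iff₀ hδ).mp (h1.trans h2)
      have hteq : |t| = L * δ := le_antisymm ht h3
      have hjr : (j : ℝ) = (L : ℝ) - 1 := by
        rw [hje]; push_cast [Nat.cast_sub hL]; ring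
      rw [hteq, hjr, abs_le]; constructor <;> nlinarith
  rcases le_or_gt 0 t with h0 | h0
  · refine ⟨(2 * j + 1) * δ / 2, ⟨j, hjL, Or.inl rfl⟩, ?_⟩
    rwa [abs_of_nonneg h0] at key
  · refine ⟨-((2 * j + 1) * δ / 2), ⟨j, hjL, Or.inr rfl⟩, ?_⟩
    rw [abs_of_neg h0] at key
    have : t - -((2 * j + 1) * δ / 2) = -(-t - (2 * j + 1) * δ / 2) := by ring
    rw [this, abs_neg]; exact key

/-- stability of the r-th order greedy ΣΔ scheme. -/
theorem greedy_sigma_delta_stability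
    (r L : ℕ) (δ C : ℝ) (hr : 1 ≤ r) (hδ : 0 < δ) (hC : 0 ≤ C)
    (Q : ℝ → ℝ)
    (hQ : ∀ t : ℝ, Q t ∈ midRise δ L ∧ ∀ a ∈ midRise δ L, |t - Q t| ≤ |t - a|)
    (y u q : ℤ → ℝ)
    (hu0 : ∀ i : ℤ, i ≤ 0 → u i = 0)
    (hqrec : ∀ i : ℤ, 1 ≤ i →
      q i = Q ((∑ j ∈ Finset.Icc 1 r, (-1 : ℝ) ^ (j - 1) * (r.choose j) * u (i - j)) + y i))
    (hurec : ∀ i : ℤ, 1 ≤ i →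
      u i = (∑ j ∈ Finset.Icc 1 r, (-1 : ℝ) ^ (j - 1) * (r.choose j) * u (i - j)) + y i - q i)
    (hy : ∀ i : ℤ, |y i| ≤ C)
    (hL : 2 * ⌈C / δ⌉₊ + 2 ^ r + 1 ≤ L) :
    ∀ i : ℤ, |u i| ≤ δ / 2 := by
  have h2r : 1 ≤ 2 ^ r := Nat.one_le_two_pow
  have hL1 : 1 ≤ L := by omega
  have hchoose : ∑ j ∈ Finset.Icc 1 r, (r.choose j : ℝ) = 2 ^ r - 1 := by
    have h0 : ∑ j ∈ Finset.range (r + 1), (r.choose j : ℝ) = 2 ^ r := by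
      exact_mod_cast congrArg (Nat.cast : ℕ → ℝ) (Nat.sum_range_choose r)
    have hset : Finset.range (r + 1) = insert 0 (Finset.Icc 1 r) := by
      ext x; simp [Finset.mem_range, Finset.mem_Icc]; omega
    rw [hset, Finset.sum_insert (by simp)] at h0
    simp at h0; linarith
  have hCd : C ≤ (⌈C / δ⌉₊ : ℝ) * δ := by
    have := Nat.le_ceil (C / δ)
    calc C = (C / δ) * δ := by field_simp
      _ ≤ (⌈C / δ⌉₊ : ℝ) * δ := by
          exact mul_le_mul_of_nonneg_right this hδ.le
  have main : ∀ n : ℕ, ∀ i : ℤ, i ≤ n → |u i| ≤ δ / 2 := by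
    intro n
    induction n with
    | zero =>
      intro i hi
      rw [hu0 i (by exact_mod_cast hi), abs_zero]; positivity
    | succ n ih =>
      intro i hi
      rcases le_or_gt i n with h | h
      · exact ih i h
      have hi1 : (1 : ℤ) ≤ i := by omega
      set t := (∑ j ∈ Finset.Icc 1 r, (-1 : ℝ) ^ (j - 1) * (r.choose j) * u (i - j)) + y i
        with hts
      have hsum : |∑ j ∈ Finset.Icc 1 r, (-1 : ℝ) ^ (j - 1) * (r.choose j) * u (i - j)|
          ≤ (2 ^ r - 1) * (δ / 2) := by
        calc |∑ j ∈ Finset.Icc 1 r, (-1 : ℝ) ^ (j - 1) * (r.choose j) * u (i - j)|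
            ≤ ∑ j ∈ Finset.Icc 1 r, |(-1 : ℝ) ^ (j - 1) * (r.choose j) * u (i - j)| :=
              Finset.abs_sum_le_sum_abs _ _
          _ ≤ ∑ j ∈ Finset.Icc 1 r, (r.choose j : ℝ) * (δ / 2) := by
              apply Finset.sum_le_sum
              intro j hj
              have hj1 : 1 ≤ j := (Finset.mem_Icc.mp hj).1
              have hij : i - (j : ℤ) ≤ n := by omega
              rw [abs_mul, abs_mul, abs_pow, abs_neg, abs_one, one_pow, one_mul,
                Nat.abs_cast]
              exact mul_le_mul_of_nonneg_left (ih _ hij) (by positivity)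
          _ = (2 ^ r - 1) * (δ / 2) := by rw [← Finset.sum_mul, hchoose]
      have hLR : ((L : ℝ)) ≥ 2 * (⌈C / δ⌉₊ : ℝ) + 2 ^ r + 1 := by
        have : ((2 * ⌈C / δ⌉₊ + 2 ^ r + 1 : ℕ) : ℝ) ≤ (L : ℝ) := Nat.cast_le.mpr hL
        push_cast at this; linarith
      have ht : |t| ≤ L * δ := by
        have h1 : |t| ≤ (2 ^ r - 1) * (δ / 2) + C := by
          calc |t| ≤ |∑ j ∈ Finset.Icc 1 r, (-1 : ℝ) ^ (j - 1) * (r.choose j) * u (i - j)|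
              + |y i| := abs_add_le _ _
            _ ≤ (2 ^ r - 1) * (δ / 2) + C := add_le_add hsum (hy i)
        have h2r' : (1 : ℝ) ≤ 2 ^ r := by exact_mod_cast h2r
        have hc0 : (0 : ℝ) ≤ (⌈C / δ⌉₊ : ℝ) := Nat.cast_nonneg _
        nlinarith
      obtain ⟨a, ha, hna⟩ := midRise_near δ hδ L hL1 t ht
      have hui : u i = t - Q t := by
        rw [hurec i hi1, hqrec i hi1]
      rw [hui]
      exact le_trans ((hQ t).2 a ha) hna
  intro i
  exact main i.toNat i (Int.self_le_toNat i)
end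

section
/- Let S = diag(s) be an m×m diagonal matrix with non-increasing positive entries, V an m×m orthogonal matrix, E an m×k real matrix, and 1 ≤ k ≤ k̃ ≤ m. Then σ_min(SV*E) ≥ s_{k̃} · σ_min(P_{k̃} V* E), where P_{k̃} ∈ ℝ^{k̃×m} projects onto the first k̃ coordinates and σ_min denotes the k-th (smallest nontrivial) singular value of the respective m×k and k̃×k matrices. -/
/-- The j-th largest singular value of a rectangular matrix, via the
Courant–Fischer max-min characterization. -/
noncomputable def singVal {m k : ℕ} (A : Matrix (Fin m) (Fin k) ℝ) (j : ℕ) : ℝ :=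
  ⨆ W : {W : Submodule ℝ (EuclideanSpace ℝ (Fin k)) // Module.finrank ℝ W = j},
    ⨅ v : {v : EuclideanSpace ℝ (Fin k) // v ∈ W.1 ∧ ‖v‖ = 1},
      ‖Matrix.toEuclideanLin A v.1‖

/-- The projection onto the first k̃ coordinates, as a k̃ × m matrix. -/
def projMat (ktil m : ℕ) : Matrix (Fin ktil) (Fin m) ℝ :=
  Matrix.of fun i j => if (j : ℕ) = (i : ℕ) then 1 else 0

/-! Put `w = Vᵀ E v`. The first `k̃` entries of `S w` are `s i * w i` with `s i ≥ s_{k̃}`, so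
`‖S Vᵀ E v‖ ≥ s_{k̃} ‖P_{k̃} Vᵀ E v‖` for every `v`, and such a pointwise domination passes
through each infimum and the supremum of the max-min formula for singular values. -/

open Matrix

lemma projMat_mulVec {ktil m : ℕ} (hkm : ktil ≤ m) (w : Fin m → ℝ) (i : Fin ktil) :
    (projMat ktil m *ᵥ w) i = w (Fin.castLE hkm i) := by
  have hcast (j : Fin m) : (j : ℕ) = i ↔ j = Fin.castLE hkm i := by simp [Fin.ext_iff]
  simp [projMat, mulVec, dotProduct, hcast]

lemma iInf_norm_unit_le_opNorm {E F : Type*} [NormedAddCommGroup E] [NormedSpace ℝ E]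
    [SeminormedAddCommGroup F] [NormedSpace ℝ F] (f : E →L[ℝ] F) (W : Submodule ℝ E) :
    ⨅ v : {v : E // v ∈ W ∧ ‖v‖ = 1}, ‖f v.1‖ ≤ ‖f‖ := by
  rcases isEmpty_or_nonempty {v : E // v ∈ W ∧ ‖v‖ = 1} with _ | ⟨⟨v⟩⟩
  · simp
  · exact (ciInf_le ⟨0, by rintro _ ⟨u, rfl⟩; positivity⟩ v).trans (f.unit_le_opNorm _ v.2.2.le)

lemma mul_singVal_le_singVal {m n k : ℕ} {A : Matrix (Fin m) (Fin k) ℝ}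
    {B : Matrix (Fin n) (Fin k) ℝ} {c : ℝ} (hc : 0 ≤ c)
    (h : ∀ v, c * ‖toEuclideanLin A v‖ ≤ ‖toEuclideanLin B v‖) (j : ℕ) :
    c * singVal A j ≤ singVal B j := by
  rw [singVal, Real.mul_iSup_of_nonneg hc]
  let f := LinearMap.toContinuousLinearMap (toEuclideanLin B)
  refine ciSup_mono ⟨‖f‖, ?_⟩ fun W => ?_
  · rintro _ ⟨W, rfl⟩
    exact iInf_norm_unit_le_opNorm f W.1
  · rw [Real.mul_iInf_of_nonneg hc]
    exact ciInf_mono ⟨0, by rintro _ ⟨u, rfl⟩; positivity⟩ fun v => h v.1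

lemma mul_norm_projMat_le_norm_diagonal {ktil m : ℕ} (hkm : ktil ≤ m) {s : Fin m → ℝ} {c : ℝ}
    (hc : 0 ≤ c) (hs : ∀ i : Fin m, (i : ℕ) < ktil → c ≤ |s i|) (x : EuclideanSpace ℝ (Fin m)) :
    c * ‖toEuclideanLin (projMat ktil m) x‖ ≤ ‖toEuclideanLin (diagonal s) x‖ := by
  have hP : ‖toEuclideanLin (projMat ktil m) x‖ ^ 2 = ∑ i : Fin ktil, x (Fin.castLE hkm i) ^ 2 := by
    simp [EuclideanSpace.real_norm_sq_eq, toLpLin_apply, projMat_mulVec hkm]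
  have hS : ‖toEuclideanLin (diagonal s) x‖ ^ 2 = ∑ i, (s i * x i) ^ 2 := by
    simp [EuclideanSpace.real_norm_sq_eq, toLpLin_apply, mulVec_diagonal]
  refine (pow_le_pow_iff_left₀ (by positivity) (norm_nonneg _) two_ne_zero).1 ?_
  calc (c * ‖toEuclideanLin (projMat ktil m) x‖) ^ 2
      = ∑ i : Fin ktil, c ^ 2 * x (Fin.castLE hkm i) ^ 2 := by rw [mul_pow, hP, Finset.mul_sum]
    _ ≤ ∑ i : Fin ktil, (s (Fin.castLE hkm i) * x (Fin.castLE hkm i)) ^ 2 := by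
      gcongr with i
      rw [mul_pow, ← sq_abs (s _)]
      gcongr
      exact hs _ i.2
    _ = ∑ i ∈ Finset.univ.map (Fin.castLEEmb hkm), (s i * x i) ^ 2 := by
      rw [Finset.sum_map]; rfl
    _ ≤ ‖toEuclideanLin (diagonal s) x‖ ^ 2 :=
      hS ▸ Finset.sum_le_univ_sum_of_nonneg fun _ => sq_nonneg _

/-- σ_min(S V* E) ≥ s_{k̃} σ_min(P_{k̃} V* E). -/
theorem singVal_min_diag_lower_bound
    (m k ktil : ℕ) (hk : 1 ≤ k) (hkk : k ≤ ktil) (hkm : ktil ≤ m)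
    (s : Fin m → ℝ) (hs_pos : ∀ i, 0 < s i)
    (hs_mono : ∀ i j : Fin m, i ≤ j → s j ≤ s i)
    (V : Matrix (Fin m) (Fin m) ℝ)
    (E : Matrix (Fin m) (Fin k) ℝ) :
    s ⟨ktil - 1, by omega⟩ * singVal (projMat ktil m * V.transpose * E) k ≤
      singVal (Matrix.diagonal s * V.transpose * E) k := by
  have hc : 0 ≤ s ⟨ktil - 1, by omega⟩ := (hs_pos _).le
  refine mul_singVal_le_singVal hc (fun v => ?_) k
  simp only [Matrix.mul_assoc, toLpLin_mul_same, LinearMap.comp_apply]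
  refine mul_norm_projMat_le_norm_diagonal hkm hc (fun i hi => ?_) _
  exact (hs_mono i _ (Fin.le_def.2 (by simp only; omega))).trans (le_abs_self _)
end
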